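/- Let t_H > 0 and t_V > 0 be real numbers and let V be a finite set of nonzero vectors in ℝ². Then there exists an integer a ≥ 1 such that no element of V is an eigenvector of the hyperbolic matrix M_H(t_H)^a · M_V(t_V)^a; that is, for every v ∈ V and every real λ, (M_H(t_H)^a · M_V(t_V)^a)·v ≠ λ·v. -/
import Mathlib


open Matrix

/-- The horizontal shear matrix `[[1, t], [0, 1]]`. -/
def MH (t : ℝ) : Matrix (Fin 2) (Fin 2) ℝ := !![1, t; 0, 1]

/-- The vertical shear matrix `[[1, 0], [t, 1]]`. -/
def MV (t : ℝ) : Matrix (Fin 2) (Fin 2) ℝ := !![1, 0; t, 1]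

lemma MH_pow (t : ℝ) (a : ℕ) : MH t ^ a = !![1, a * t; 0, 1] := by
  induction a with
  | zero => simp [Matrix.one_fin_two]
  | succ n ih =>
    rw [pow_succ, ih, MH, Matrix.mul_fin_two]
    ext i j
    fin_cases i <;> fin_cases j <;> simp <;> push_cast <;> ring

lemma MV_pow (t : ℝ) (a : ℕ) : MV t ^ a = !![1, 0; a * t, 1] := by
  induction a with
  | zero => simp [Matrix.one_fin_two]
  | succ n ih =>
    rw [pow_succ, ih, MV, Matrix.mul_fin_two]
    ext i j
    fin_cases i <;> fin_cases j <;> simp <;> push_cast <;> ring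

/-- The unique problematic value of `a` for a vector `v`. -/
noncomputable def badA (tH tV : ℝ) (v : Fin 2 → ℝ) : ℝ :=
  (tV * (v 0) ^ 2 - tH * (v 1) ^ 2) / (tH * tV * (v 0) * (v 1))

/-- Given a finite set `V` of nonzero vectors of `ℝ²`, there exists `a ≥ 1`
such that no element of `V` is an eigenvector of `M_H(t_H)^a · M_V(t_V)^a`. -/
theorem exists_hyperbolic_avoiding (tH tV : ℝ) (htH : 0 < tH) (htV : 0 < tV)
    (V : Finset (Fin 2 → ℝ)) (hV : ∀ v ∈ V, v ≠ 0) :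
    ∃ a : ℕ, 1 ≤ a ∧ ∀ v ∈ V, ∀ lam : ℝ,
      ((MH tH) ^ a * (MV tV) ^ a).mulVec v ≠ lam • v := by
  classical
  set B : Finset ℝ := insert 0 (V.image (badA tH tV)) with hB
  obtain ⟨n, hn⟩ := exists_nat_gt (B.max' ⟨0, by simp [hB]⟩)
  refine ⟨max n 1, le_max_right _ _, ?_⟩
  set a : ℕ := max n 1 with ha
  have ha1 : (1 : ℕ) ≤ a := le_max_right _ _
  have haR : (0 : ℝ) < (a : ℝ) := by exact_mod_cast ha1
  intro v hv lam h
  have hbad : badA tH tV v < (a : ℝ) := by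
    have h1 : badA tH tV v ≤ B.max' ⟨0, by simp [hB]⟩ :=
      Finset.le_max' _ _ (by simp [hB]; exact Or.inr ⟨v, hv, rfl⟩)
    have h2 : (n : ℝ) ≤ (a : ℝ) := by exact_mod_cast le_max_left n 1
    linarith
  rw [MH_pow, MV_pow, Matrix.mul_fin_two] at h
  have h0 := congrFun h 0
  have h1 := congrFun h 1
  simp [Matrix.mulVec, dotProduct, Fin.sum_univ_two] at h0 h1
  set x := v 0 with hx
  set y := v 1 with hy
  -- key polynomial identity from eliminating lam
  have key : tH * tV * (a : ℝ) ^ 2 * x * y + tH * (a : ℝ) * y ^ 2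
      - tV * (a : ℝ) * x ^ 2 = 0 := by linear_combination y * h0 - x * h1
  by_cases hx0 : x = 0
  · by_cases hy0 : y = 0
    · exact hV v hv (funext fun i => by fin_cases i <;> assumption)
    · have : tH * (a : ℝ) * y ^ 2 > 0 := by positivity
      rw [hx0] at key; nlinarith
  · by_cases hy0 : y = 0
    · have : tV * (a : ℝ) * x ^ 2 > 0 := by positivity
      rw [hy0] at key; nlinarith
    · have hs : tH * tV * x * y ≠ 0 := by
        intro hc
        rcases mul_eq_zero.mp hc with hc' | hc'
        · rcases mul_eq_zero.mp hc' with hc'' | hc''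
          · exact (mul_pos htH htV).ne' hc''
          · exact hx0 hc''
        · exact hy0 hc'
      have heq : badA tH tV v = (a : ℝ) := by
        rw [badA, div_eq_iff hs]
        have step : (a:ℝ) * (tV * x ^ 2 - tH * y ^ 2)
            = (a:ℝ) * ((a:ℝ) * (tH * tV * x * y)) := by linear_combination -key
        exact mul_left_cancel₀ haR.ne' step
      linarith
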